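/- Brioschi formula: for a surface patch with first fundamental form coefficients E, F, G, the Gaussian curvature can be expressed purely in terms of E, F, G and their first and second partial derivatives, via K = (det A - det B)/(EG - F²)², where A and B are the standard Brioschi matrices built from derivatives of E, F, G. -/

import Mathlib

open scoped BigOperators

noncomputable section

/-- Euclidean dot product on `ℝ³`. -/
def dot3 (u v : Fin 3 → ℝ) : ℝ := ∑ i, u i * v i

/-- Cross product on `ℝ³`. -/
def cross3 (u v : Fin 3 → ℝ) : Fin 3 → ℝ :=
  ![u 1 * v 2 - u 2 * v 1, u 2 * v 0 - u 0 * v 2, u 0 * v 1 - u 1 * v 0]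

/-- Partial derivative in the first (`u`) variable. -/
def pdu {E : Type*} [NormedAddCommGroup E] [NormedSpace ℝ E]
    (f : ℝ × ℝ → E) (p : ℝ × ℝ) : E := fderiv ℝ f p (1, 0)

/-- Partial derivative in the second (`v`) variable. -/
def pdv {E : Type*} [NormedAddCommGroup E] [NormedSpace ℝ E]
    (f : ℝ × ℝ → E) (p : ℝ × ℝ) : E := fderiv ℝ f p (0, 1)

/-- First fundamental form coefficients `E`, `F`, `G` of a surface patch. -/
def coefE (r : ℝ × ℝ → Fin 3 → ℝ) (p : ℝ × ℝ) : ℝ := dot3 (pdu r p) (pdu r p)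
def coefF (r : ℝ × ℝ → Fin 3 → ℝ) (p : ℝ × ℝ) : ℝ := dot3 (pdu r p) (pdv r p)
def coefG (r : ℝ × ℝ → Fin 3 → ℝ) (p : ℝ × ℝ) : ℝ := dot3 (pdv r p) (pdv r p)

/-- Unit normal of a surface patch. -/
def unitNormal (r : ℝ × ℝ → Fin 3 → ℝ) (p : ℝ × ℝ) : Fin 3 → ℝ :=
  (Real.sqrt (dot3 (cross3 (pdu r p) (pdv r p)) (cross3 (pdu r p) (pdv r p))))⁻¹ •
    cross3 (pdu r p) (pdv r p)

/-- Second fundamental form coefficients `L`, `M`, `N` of a surface patch. -/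
def coefL (r : ℝ × ℝ → Fin 3 → ℝ) (p : ℝ × ℝ) : ℝ := dot3 (pdu (pdu r) p) (unitNormal r p)
def coefM (r : ℝ × ℝ → Fin 3 → ℝ) (p : ℝ × ℝ) : ℝ := dot3 (pdv (pdu r) p) (unitNormal r p)
def coefN (r : ℝ × ℝ → Fin 3 → ℝ) (p : ℝ × ℝ) : ℝ := dot3 (pdv (pdv r) p) (unitNormal r p)

/-- Gaussian curvature `K = (LN - M²)/(EG - F²)` of a surface patch. -/
def gaussK (r : ℝ × ℝ → Fin 3 → ℝ) (p : ℝ × ℝ) : ℝ :=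
  (coefL r p * coefN r p - coefM r p ^ 2) / (coefE r p * coefG r p - coefF r p ^ 2)

/-- The first Brioschi matrix, built from `E, F, G` and their partial derivatives. -/
def brioschiA (r : ℝ × ℝ → Fin 3 → ℝ) (p : ℝ × ℝ) : Matrix (Fin 3) (Fin 3) ℝ :=
  !![-(1/2) * pdv (pdv (coefE r)) p + pdu (pdv (coefF r)) p - (1/2) * pdu (pdu (coefG r)) p,
       (1/2) * pdu (coefE r) p, pdu (coefF r) p - (1/2) * pdv (coefE r) p;
     pdv (coefF r) p - (1/2) * pdu (coefG r) p, coefE r p, coefF r p;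
     (1/2) * pdv (coefG r) p, coefF r p, coefG r p]

/-- The second Brioschi matrix. -/
def brioschiB (r : ℝ × ℝ → Fin 3 → ℝ) (p : ℝ × ℝ) : Matrix (Fin 3) (Fin 3) ℝ :=
  !![0, (1/2) * pdv (coefE r) p, (1/2) * pdu (coefG r) p;
     (1/2) * pdv (coefE r) p, coefE r p, coefF r p;
     (1/2) * pdu (coefG r) p, coefF r p, coefG r p]

namespace BrioschiAux

/-- Partial derivative in the `u` direction, as an operator on scalar functions. -/
private def P1 (f : ℝ × ℝ → ℝ) : ℝ × ℝ → ℝ := fun q => fderiv ℝ f q (1, 0)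
/-- Partial derivative in the `v` direction, as an operator on scalar functions. -/
private def P2 (f : ℝ × ℝ → ℝ) : ℝ × ℝ → ℝ := fun q => fderiv ℝ f q (0, 1)
/-- Component of a vector-valued map. -/
private def Rc (r : ℝ × ℝ → Fin 3 → ℝ) (i : Fin 3) : ℝ × ℝ → ℝ := fun z => r z i

private lemma contDiff_pd {E : Type*} [NormedAddCommGroup E] [NormedSpace ℝ E]
    {f : ℝ × ℝ → E} (hf : ContDiff ℝ (⊤ : ℕ∞) f) (w : ℝ × ℝ) :
    ContDiff ℝ (⊤ : ℕ∞) (fun p => fderiv ℝ f p w) :=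
  (hf.fderiv_right (by simp)).clm_apply contDiff_const

private lemma P1_contDiff {f : ℝ × ℝ → ℝ} (hf : ContDiff ℝ (⊤ : ℕ∞) f) : ContDiff ℝ (⊤ : ℕ∞) (P1 f) :=
  contDiff_pd hf _
private lemma P2_contDiff {f : ℝ × ℝ → ℝ} (hf : ContDiff ℝ (⊤ : ℕ∞) f) : ContDiff ℝ (⊤ : ℕ∞) (P2 f) :=
  contDiff_pd hf _

private lemma pd_comm {f : ℝ × ℝ → ℝ} (hf : ContDiff ℝ (⊤ : ℕ∞) f) (x v w : ℝ × ℝ) :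
    fderiv ℝ (fun q => fderiv ℝ f q v) x w = fderiv ℝ (fun q => fderiv ℝ f q w) x v := by
  have hd : Differentiable ℝ (fderiv ℝ f) := (hf.fderiv_right (m := (⊤ : ℕ∞)) (by simp)).differentiable (by simp)
  have key : ∀ u z : ℝ × ℝ, fderiv ℝ (fun q => fderiv ℝ f q u) x z
      = fderiv ℝ (fderiv ℝ f) x z u := by
    intro u z
    have h := fderiv_clm_apply (c := fderiv ℝ f) (u := fun _ => u) (hd x)
      (differentiableAt_const u)
    rw [h]
    simp
  rw [key, key]
  exact (hf.contDiffAt.isSymmSndFDerivAt (by simp [minSmoothness_of_isRCLikeNormedField]; exact WithTop.coe_le_coe.mpr le_top)).eq w v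

private lemma P12_comm {f : ℝ × ℝ → ℝ} (hf : ContDiff ℝ (⊤ : ℕ∞) f) : P1 (P2 f) = P2 (P1 f) :=
  funext fun x => pd_comm hf x (0, 1) (1, 0)

private lemma pd_apply {f : ℝ × ℝ → Fin 3 → ℝ} {x : ℝ × ℝ} (hf : DifferentiableAt ℝ f x)
    (w : ℝ × ℝ) (i : Fin 3) :
    fderiv ℝ f x w i = fderiv ℝ (fun q => f q i) x w := by
  have h := ((ContinuousLinearMap.proj (R := ℝ) (φ := fun _ : Fin 3 => ℝ) i).hasFDerivAt
    (x := f x)).comp x hf.hasFDerivAt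
  have h2 : fderiv ℝ (fun q => f q i) x
      = (ContinuousLinearMap.proj i).comp (fderiv ℝ f x) := h.fderiv
  rw [h2]
  rfl

private lemma pd_sum_mul₂ (f g h k : Fin 3 → ℝ × ℝ → ℝ) (x w : ℝ × ℝ)
    (hf : ∀ i, DifferentiableAt ℝ (f i) x) (hg : ∀ i, DifferentiableAt ℝ (g i) x)
    (hh : ∀ i, DifferentiableAt ℝ (h i) x) (hk : ∀ i, DifferentiableAt ℝ (k i) x) :
    fderiv ℝ (fun q => ∑ i, (f i q * g i q + h i q * k i q)) x w
      = ∑ i, (fderiv ℝ (f i) x w * g i x + f i x * fderiv ℝ (g i) x w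
          + fderiv ℝ (h i) x w * k i x + h i x * fderiv ℝ (k i) x w) := by
  have hd : HasFDerivAt (fun q => ∑ i : Fin 3, (f i q * g i q + h i q * k i q))
      (∑ i : Fin 3, ((f i x • fderiv ℝ (g i) x + g i x • fderiv ℝ (f i) x)
        + (h i x • fderiv ℝ (k i) x + k i x • fderiv ℝ (h i) x))) x :=
    HasFDerivAt.fun_sum fun i _ =>
      ((hf i).hasFDerivAt.mul (hg i).hasFDerivAt).add
        ((hh i).hasFDerivAt.mul (hk i).hasFDerivAt)
  rw [hd.fderiv]
  simp only [ContinuousLinearMap.sum_apply, ContinuousLinearMap.add_apply,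
    ContinuousLinearMap.smul_apply, smul_eq_mul]
  exact Finset.sum_congr rfl fun i _ => by ring

private lemma pd_sum_mul (f g : Fin 3 → ℝ × ℝ → ℝ) (x w : ℝ × ℝ)
    (hf : ∀ i, DifferentiableAt ℝ (f i) x) (hg : ∀ i, DifferentiableAt ℝ (g i) x) :
    fderiv ℝ (fun q => ∑ i, f i q * g i q) x w
      = ∑ i, (fderiv ℝ (f i) x w * g i x + f i x * fderiv ℝ (g i) x w) := by
  have hd : HasFDerivAt (fun q => ∑ i : Fin 3, f i q * g i q)
      (∑ i : Fin 3, (f i x • fderiv ℝ (g i) x + g i x • fderiv ℝ (f i) x)) x :=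
    HasFDerivAt.fun_sum fun i _ => (hf i).hasFDerivAt.mul (hg i).hasFDerivAt
  rw [hd.fderiv]
  simp only [ContinuousLinearMap.sum_apply, ContinuousLinearMap.add_apply,
    ContinuousLinearMap.smul_apply, smul_eq_mul]
  exact Finset.sum_congr rfl fun i _ => by ring

end BrioschiAux

open BrioschiAux in
/-- Brioschi formula: the Gaussian curvature of a smooth immersed surface patch is
expressed purely in terms of `E, F, G` and their first and second partial derivatives:
`K = (det A - det B)/(EG - F²)²`. -/
theorem brioschi_formula
    (U : Set (ℝ × ℝ)) (hU : IsOpen U)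
    (r : ℝ × ℝ → Fin 3 → ℝ) (hr : ContDiff ℝ (⊤ : ℕ∞) r)
    (himm : ∀ p ∈ U, cross3 (pdu r p) (pdv r p) ≠ 0) :
    ∀ p ∈ U, gaussK r p =
      ((brioschiA r p).det - (brioschiB r p).det) /
        (coefE r p * coefG r p - coefF r p ^ 2) ^ 2 := by
  intro p hp
  have hrd : Differentiable ℝ r := hr.differentiable (by simp)
  have hcm : ∀ i : Fin 3, ContDiff ℝ (⊤ : ℕ∞) (Rc r i) := fun i =>
    (ContinuousLinearMap.proj (R := ℝ) (φ := fun _ : Fin 3 => ℝ) i).contDiff.comp hr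
  have h1u : ∀ i, ContDiff ℝ (⊤ : ℕ∞) (P1 (Rc r i)) := fun i => P1_contDiff (hcm i)
  have h1v : ∀ i, ContDiff ℝ (⊤ : ℕ∞) (P2 (Rc r i)) := fun i => P2_contDiff (hcm i)
  have h2a : ∀ i, ContDiff ℝ (⊤ : ℕ∞) (P1 (P1 (Rc r i))) := fun i => P1_contDiff (h1u i)
  have h2b : ∀ i, ContDiff ℝ (⊤ : ℕ∞) (P2 (P1 (Rc r i))) := fun i => P2_contDiff (h1u i)
  have h2c : ∀ i, ContDiff ℝ (⊤ : ℕ∞) (P2 (P2 (Rc r i))) := fun i => P2_contDiff (h1v i)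
  have d1u : ∀ i (q : ℝ × ℝ), DifferentiableAt ℝ (P1 (Rc r i)) q :=
    fun i q => ((h1u i).differentiable (by simp)) q
  have d1v : ∀ i (q : ℝ × ℝ), DifferentiableAt ℝ (P2 (Rc r i)) q :=
    fun i q => ((h1v i).differentiable (by simp)) q
  have d2a : ∀ i (q : ℝ × ℝ), DifferentiableAt ℝ (P1 (P1 (Rc r i))) q :=
    fun i q => ((h2a i).differentiable (by simp)) q
  have d2b : ∀ i (q : ℝ × ℝ), DifferentiableAt ℝ (P2 (P1 (Rc r i))) q :=
    fun i q => ((h2b i).differentiable (by simp)) q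
  have d2c : ∀ i (q : ℝ × ℝ), DifferentiableAt ℝ (P2 (P2 (Rc r i))) q :=
    fun i q => ((h2c i).differentiable (by simp)) q
  -- symmetry of second derivatives
  have hsym : ∀ i, P1 (P2 (Rc r i)) = P2 (P1 (Rc r i)) := fun i => P12_comm (hcm i)
  have h3 : ∀ i, P1 (P2 (P2 (Rc r i))) p = P2 (P2 (P1 (Rc r i))) p := by
    intro i
    have h := pd_comm (h1v i) p (0, 1) (1, 0)
    have h' : P1 (P2 (P2 (Rc r i))) p = P2 (P1 (P2 (Rc r i))) p := h
    rw [h', hsym i]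
  -- components of the derivatives of r
  have hcu : ∀ (q : ℝ × ℝ) i, pdu r q i = P1 (Rc r i) q := fun q i => pd_apply (hrd q) (1, 0) i
  have hcv : ∀ (q : ℝ × ℝ) i, pdv r q i = P2 (Rc r i) q := fun q i => pd_apply (hrd q) (0, 1) i
  have hdru : DifferentiableAt ℝ (pdu r) p := ((contDiff_pd hr (1, 0)).differentiable (by simp)) p
  have hdrv : DifferentiableAt ℝ (pdv r) p := ((contDiff_pd hr (0, 1)).differentiable (by simp)) p
  have hfun_u : ∀ i, (fun q => pdu r q i) = P1 (Rc r i) := fun i => funext fun q => hcu q i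
  have hfun_v : ∀ i, (fun q => pdv r q i) = P2 (Rc r i) := fun i => funext fun q => hcv q i
  have hveca : ∀ i, pdu (pdu r) p i = P1 (P1 (Rc r i)) p := by
    intro i
    rw [show pdu (pdu r) p i = fderiv ℝ (fun q => pdu r q i) p (1, 0) from
      pd_apply hdru (1, 0) i, hfun_u i]
    rfl
  have hvecb : ∀ i, pdv (pdu r) p i = P2 (P1 (Rc r i)) p := by
    intro i
    rw [show pdv (pdu r) p i = fderiv ℝ (fun q => pdu r q i) p (0, 1) from
      pd_apply hdru (0, 1) i, hfun_u i]
    rfl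
  have hvecc : ∀ i, pdv (pdv r) p i = P2 (P2 (Rc r i)) p := by
    intro i
    rw [show pdv (pdv r) p i = fderiv ℝ (fun q => pdv r q i) p (0, 1) from
      pd_apply hdrv (0, 1) i, hfun_v i]
    rfl
  -- the first fundamental form as explicit sums
  have hE_fun : coefE r = fun q => ∑ i, P1 (Rc r i) q * P1 (Rc r i) q := funext fun q => by
    simp only [coefE, dot3]
    exact Finset.sum_congr rfl fun i _ => by rw [hcu q i]
  have hF_fun : coefF r = fun q => ∑ i, P1 (Rc r i) q * P2 (Rc r i) q := funext fun q => by
    simp only [coefF, dot3]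
    exact Finset.sum_congr rfl fun i _ => by rw [hcu q i, hcv q i]
  have hG_fun : coefG r = fun q => ∑ i, P2 (Rc r i) q * P2 (Rc r i) q := funext fun q => by
    simp only [coefG, dot3]
    exact Finset.sum_congr rfl fun i _ => by rw [hcv q i]
  -- first derivatives of E, F, G (as functions where needed later)
  have hEv_fun : pdv (coefE r)
      = fun q => ∑ i, (P2 (P1 (Rc r i)) q * P1 (Rc r i) q
          + P1 (Rc r i) q * P2 (P1 (Rc r i)) q) := funext fun q => by
    rw [hE_fun]
    exact pd_sum_mul _ _ q (0, 1) (fun i => d1u i q) (fun i => d1u i q)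
  have hFv_fun : pdv (coefF r)
      = fun q => ∑ i, (P2 (P1 (Rc r i)) q * P2 (Rc r i) q
          + P1 (Rc r i) q * P2 (P2 (Rc r i)) q) := funext fun q => by
    rw [hF_fun]
    exact pd_sum_mul _ _ q (0, 1) (fun i => d1u i q) (fun i => d1v i q)
  have hGu_fun : pdu (coefG r)
      = fun q => ∑ i, (P1 (P2 (Rc r i)) q * P2 (Rc r i) q
          + P2 (Rc r i) q * P1 (P2 (Rc r i)) q) := funext fun q => by
    rw [hG_fun]
    exact pd_sum_mul _ _ q (1, 0) (fun i => d1v i q) (fun i => d1v i q)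
  have hGu_fun' : pdu (coefG r)
      = fun q => ∑ i, (P2 (P1 (Rc r i)) q * P2 (Rc r i) q
          + P2 (Rc r i) q * P2 (P1 (Rc r i)) q) := by
    rw [hGu_fun]
    simp only [hsym]
  have hEu : pdu (coefE r) p = ∑ i, (P1 (P1 (Rc r i)) p * P1 (Rc r i) p
      + P1 (Rc r i) p * P1 (P1 (Rc r i)) p) := by
    rw [hE_fun]
    exact pd_sum_mul _ _ p (1, 0) (fun i => d1u i p) (fun i => d1u i p)
  have hEv : pdv (coefE r) p = ∑ i, (P2 (P1 (Rc r i)) p * P1 (Rc r i) p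
      + P1 (Rc r i) p * P2 (P1 (Rc r i)) p) := congrFun hEv_fun p
  have hFu : pdu (coefF r) p = ∑ i, (P1 (P1 (Rc r i)) p * P2 (Rc r i) p
      + P1 (Rc r i) p * P1 (P2 (Rc r i)) p) := by
    rw [hF_fun]
    exact pd_sum_mul _ _ p (1, 0) (fun i => d1u i p) (fun i => d1v i p)
  have hFv : pdv (coefF r) p = ∑ i, (P2 (P1 (Rc r i)) p * P2 (Rc r i) p
      + P1 (Rc r i) p * P2 (P2 (Rc r i)) p) := congrFun hFv_fun p
  have hGu : pdu (coefG r) p = ∑ i, (P2 (P1 (Rc r i)) p * P2 (Rc r i) p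
      + P2 (Rc r i) p * P2 (P1 (Rc r i)) p) := congrFun hGu_fun' p
  have hGv : pdv (coefG r) p = ∑ i, (P2 (P2 (Rc r i)) p * P2 (Rc r i) p
      + P2 (Rc r i) p * P2 (P2 (Rc r i)) p) := by
    rw [hG_fun]
    exact pd_sum_mul _ _ p (0, 1) (fun i => d1v i p) (fun i => d1v i p)
  -- second derivatives at p
  have hEvv : pdv (pdv (coefE r)) p
      = ∑ i, (P2 (P2 (P1 (Rc r i))) p * P1 (Rc r i) p
          + P2 (P1 (Rc r i)) p * P2 (P1 (Rc r i)) p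
          + P2 (P1 (Rc r i)) p * P2 (P1 (Rc r i)) p
          + P1 (Rc r i) p * P2 (P2 (P1 (Rc r i))) p) := by
    rw [hEv_fun]
    exact pd_sum_mul₂ _ _ _ _ p (0, 1) (fun i => d2b i p) (fun i => d1u i p)
      (fun i => d1u i p) (fun i => d2b i p)
  have hFuv : pdu (pdv (coefF r)) p
      = ∑ i, (P1 (P2 (P1 (Rc r i))) p * P2 (Rc r i) p
          + P2 (P1 (Rc r i)) p * P1 (P2 (Rc r i)) p
          + P1 (P1 (Rc r i)) p * P2 (P2 (Rc r i)) p
          + P1 (Rc r i) p * P1 (P2 (P2 (Rc r i))) p) := by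
    rw [hFv_fun]
    exact pd_sum_mul₂ _ _ _ _ p (1, 0) (fun i => d2b i p) (fun i => d1v i p)
      (fun i => d1u i p) (fun i => d2c i p)
  have hGuu : pdu (pdu (coefG r)) p
      = ∑ i, (P1 (P2 (P1 (Rc r i))) p * P2 (Rc r i) p
          + P2 (P1 (Rc r i)) p * P1 (P2 (Rc r i)) p
          + P1 (P2 (Rc r i)) p * P2 (P1 (Rc r i)) p
          + P2 (Rc r i) p * P1 (P2 (P1 (Rc r i))) p) := by
    rw [hGu_fun']
    exact pd_sum_mul₂ _ _ _ _ p (1, 0) (fun i => d2b i p) (fun i => d1v i p)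
      (fun i => d1v i p) (fun i => d2b i p)
  -- positivity of the area element
  have hWpos : 0 < dot3 (cross3 (pdu r p) (pdv r p)) (cross3 (pdu r p) (pdv r p)) := by
    have h0 : 0 ≤ dot3 (cross3 (pdu r p) (pdv r p)) (cross3 (pdu r p) (pdv r p)) :=
      Finset.sum_nonneg fun i _ => mul_self_nonneg _
    rcases h0.lt_or_eq with h | h
    · exact h
    · exfalso
      apply himm p hp
      funext i
      have h' := (Finset.sum_eq_zero_iff_of_nonneg
        (fun j _ => mul_self_nonneg (cross3 (pdu r p) (pdv r p) j))).mp h.symm i (Finset.mem_univ i)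
      simpa using mul_self_eq_zero.mp h'
  have hW : dot3 (cross3 (pdu r p) (pdv r p)) (cross3 (pdu r p) (pdv r p))
      = coefE r p * coefG r p - coefF r p ^ 2 := by
    simp only [coefE, coefF, coefG, dot3, cross3, Fin.sum_univ_three,
      Matrix.cons_val_zero, Matrix.cons_val_one, Matrix.head_cons,
      Matrix.cons_val_two, Matrix.tail_cons]
    ring
  have hs0 : Real.sqrt (dot3 (cross3 (pdu r p) (pdv r p)) (cross3 (pdu r p) (pdv r p))) ≠ 0 :=
    (Real.sqrt_pos.mpr hWpos).ne'
  have hs : Real.sqrt (dot3 (cross3 (pdu r p) (pdv r p)) (cross3 (pdu r p) (pdv r p))) ^ 2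
      = dot3 (cross3 (pdu r p) (pdv r p)) (cross3 (pdu r p) (pdv r p)) :=
    Real.sq_sqrt hWpos.le
  -- split the normal factor out of L, M, N
  have hsplit : ∀ x : Fin 3 → ℝ, dot3 x (unitNormal r p)
      = (Real.sqrt (dot3 (cross3 (pdu r p) (pdv r p)) (cross3 (pdu r p) (pdv r p))))⁻¹
        * dot3 x (cross3 (pdu r p) (pdv r p)) := by
    intro x
    simp only [unitNormal, dot3, Pi.smul_apply, smul_eq_mul, Finset.mul_sum]
    exact Finset.sum_congr rfl fun i _ => by ring
  have hKEY : (coefL r p * coefN r p - coefM r p ^ 2)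
        * dot3 (cross3 (pdu r p) (pdv r p)) (cross3 (pdu r p) (pdv r p))
      = dot3 (pdu (pdu r) p) (cross3 (pdu r p) (pdv r p))
          * dot3 (pdv (pdv r) p) (cross3 (pdu r p) (pdv r p))
        - dot3 (pdv (pdu r) p) (cross3 (pdu r p) (pdv r p)) ^ 2 := by
    rw [coefL, coefM, coefN, hsplit, hsplit, hsplit, ← hs]
    field_simp
    rw [hs, hs]
  -- the Brioschi polynomial identity
  have hPOLY : dot3 (pdu (pdu r) p) (cross3 (pdu r p) (pdv r p))
          * dot3 (pdv (pdv r) p) (cross3 (pdu r p) (pdv r p))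
        - dot3 (pdv (pdu r) p) (cross3 (pdu r p) (pdv r p)) ^ 2
      = (brioschiA r p).det - (brioschiB r p).det := by
    have hE_p : coefE r p = ∑ i, P1 (Rc r i) p * P1 (Rc r i) p := congrFun hE_fun p
    have hF_p : coefF r p = ∑ i, P1 (Rc r i) p * P2 (Rc r i) p := congrFun hF_fun p
    have hG_p : coefG r p = ∑ i, P2 (Rc r i) p * P2 (Rc r i) p := congrFun hG_fun p
    simp only [brioschiA, brioschiB, Matrix.det_fin_three, Matrix.of_apply, Matrix.cons_val',
      Matrix.cons_val_zero, Matrix.cons_val_one, Matrix.head_cons, Matrix.empty_val',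
      Matrix.cons_val_fin_one, Matrix.head_fin_const, Matrix.cons_val_two, Matrix.tail_cons]
    rw [hEvv, hFuv, hGuu, hEu, hEv, hFu, hFv, hGu, hGv, hE_p, hF_p, hG_p]
    simp only [hsym, h3]
    simp only [dot3, cross3, Fin.sum_univ_three, Matrix.cons_val_zero, Matrix.cons_val_one,
      Matrix.head_cons, Matrix.cons_val_two, Matrix.tail_cons]
    simp only [hcu p, hcv p, hveca, hvecb, hvecc]
    ring
  -- put everything together
  rw [gaussK, ← hW,
    show (coefL r p * coefN r p - coefM r p ^ 2)
        / dot3 (cross3 (pdu r p) (pdv r p)) (cross3 (pdu r p) (pdv r p))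
      = ((coefL r p * coefN r p - coefM r p ^ 2)
          * dot3 (cross3 (pdu r p) (pdv r p)) (cross3 (pdu r p) (pdv r p)))
        / dot3 (cross3 (pdu r p) (pdv r p)) (cross3 (pdu r p) (pdv r p)) ^ 2 from by
      rw [div_eq_div_iff hWpos.ne' (pow_ne_zero 2 hWpos.ne')]; ring,
    hKEY, hPOLY]

end
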